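/- Let a, b, c be complex numbers with c ≠ 2, c ≠ 1 + b, c ≠ a + 1, with Re(c + (2c − 3 − a + ab − b)/(c − 2) − 2 − a − b) > 0, and with neither c nor (2c − 3 − a + ab − b)/(c − 2) a nonpositive integer. Then ₃F₂(2, a, b; c, (2c − 3 − a + ab − b)/(c − 2); 1) = −(c − 1)(c + ab − b − a − 1) / ((c − 1 − b)(a + 1 − c)). -/

import Mathlib

/-!
Put `s = c + e - 2 - a - b` with `e = (2c - 3 - a + ab - b)/(c - 2)`. This choice of `e` amounts to
the relation `(c - 1)(e - 1) - ab = s`, which makes the series Gosper-summable: writing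
`R k = (a)_k (b)_k / ((c)_k (e)_k)`, the `k`-th term `(k + 1) R k` equals `(A k - A (k + 1)) / s`
with `A k = R k (k + c - 1)(k + e - 1)`. Euler's limit formula for `Γ` gives
`R k = O(k ^ (-2 - Re s))`, so the series converges absolutely and `A k → 0`; hence the sum is
`A 0 / s = (c - 1)(e - 1) / s`, and `(c - 2) s = (c - 1 - a)(c - 1 - b)` turns this into the
stated closed form.
-/

open Complex Finset

/-- The generalized hypergeometric series ₃F₂(a₁,a₂,a₃; b₁,b₂; 1) over ℂ. -/
noncomputable def hyp3F2 (a₁ a₂ a₃ b₁ b₂ : ℂ) : ℂ :=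
  ∑' k : ℕ,
    ((ascPochhammer ℂ k).eval a₁ * (ascPochhammer ℂ k).eval a₂ * (ascPochhammer ℂ k).eval a₃) /
    ((ascPochhammer ℂ k).eval b₁ * (ascPochhammer ℂ k).eval b₂ * (Nat.factorial k : ℂ))

/-- `x` is not a nonpositive integer (equivalently, not a pole of Γ). -/
def NotNonposInt (x : ℂ) : Prop := ∀ m : ℕ, x ≠ -(m : ℂ)

open Filter Topology Asymptotics

theorem ascPochhammer_eval_two (S : Type*) [Semiring S] (n : ℕ) :
    (ascPochhammer S n).eval 2 = ((n + 1).factorial : S) := by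
  simpa [one_add_one_eq_two, add_comm] using factorial_mul_ascPochhammer S 1 n

theorem ascPochhammer_eval_eq_prod_range {R : Type*} [CommSemiring R] (n : ℕ) (r : R) :
    (ascPochhammer R n).eval r = ∏ j ∈ range n, (r + j) := by
  induction n with
  | zero => simp
  | succ n ih => rw [ascPochhammer_succ_eval, prod_range_succ, ih]

theorem NotNonposInt.ascPochhammer_eval_ne_zero {x : ℂ} (hx : NotNonposInt x) (n : ℕ) :
    (ascPochhammer ℂ n).eval x ≠ 0 := by
  rw [Ne, ascPochhammer_eval_eq_zero_iff]
  rintro ⟨k, -, hk⟩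
  exact hx k (by rw [hk, neg_neg])

theorem Complex.GammaSeq_eq_div_ascPochhammer (x : ℂ) (n : ℕ) :
    GammaSeq x n = (n : ℂ) ^ x * n.factorial / (ascPochhammer ℂ (n + 1)).eval x := by
  rw [GammaSeq, ascPochhammer_eval_eq_prod_range]

theorem isBigO_natCast_rpow_of_isBigO_succ {E : Type*} [Norm E] {f : ℕ → E} {r : ℝ}
    (h : (fun n ↦ f (n + 1)) =O[atTop] fun n : ℕ ↦ (n : ℝ) ^ r) :
    f =O[atTop] fun n : ℕ ↦ (n : ℝ) ^ r := by
  have hequiv : (fun n : ℕ ↦ (n : ℝ) + 1) ~[atTop] fun n : ℕ ↦ (n : ℝ) :=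
    IsEquivalent.refl.add_const_of_norm_tendsto_atTop
      (tendsto_norm_atTop_atTop.comp tendsto_natCast_atTop_atTop)
  have hshift : (fun n : ℕ ↦ (n : ℝ) ^ r) =O[atTop] fun n : ℕ ↦ ((n + 1 : ℕ) : ℝ) ^ r := by
    push_cast
    exact (hequiv.isTheta_symm.rpow (.of_forall fun _ ↦ by positivity)
      (.of_forall fun _ ↦ by positivity)).isBigO
  refine ((h.trans hshift).comp_tendsto (tendsto_sub_atTop_nat 1)).congr' ?_ ?_ <;>
  · filter_upwards [eventually_ge_atTop 1] with n hn
    simp only [Function.comp_apply, Nat.sub_add_cancel hn]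

theorem Asymptotics.IsBigO.mul_natCast_rpow {R : Type*} [SeminormedRing R] {f g : ℕ → R}
    {r t : ℝ}
    (hf : f =O[atTop] fun n : ℕ ↦ (n : ℝ) ^ r) (hg : g =O[atTop] fun n : ℕ ↦ (n : ℝ) ^ t) :
    (fun n ↦ f n * g n) =O[atTop] fun n : ℕ ↦ (n : ℝ) ^ (r + t) := by
  refine (hf.mul hg).congr' .rfl ?_
  filter_upwards [eventually_gt_atTop 0] with n hn
  rw [Real.rpow_add (by exact_mod_cast hn)]

theorem isBigO_natCast_add {𝕜 : Type*} [RCLike 𝕜] (z : 𝕜) :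
    (fun n : ℕ ↦ (n : 𝕜) + z) =O[atTop] fun n : ℕ ↦ (n : ℝ) ^ (1 : ℝ) := by
  simp only [Real.rpow_one]
  refine IsBigO.add (.of_bound' (.of_forall fun n ↦ by simp)) ?_
  exact (isLittleO_const_id_atTop z).isBigO.comp_tendsto tendsto_natCast_atTop_atTop

theorem isBigO_GammaSeq_div_GammaSeq (a c : ℂ) :
    (fun n ↦ GammaSeq c n / GammaSeq a n) =O[atTop] (fun _ ↦ (1 : ℝ)) := by
  by_cases ha : NotNonposInt a
  · exact ((GammaSeq_tendsto_Gamma c).div (GammaSeq_tendsto_Gamma a)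
      (Gamma_ne_zero ha)).isBigO_one ℝ
  · obtain ⟨m, rfl⟩ : ∃ m : ℕ, a = -(m : ℂ) := by simpa [NotNonposInt] using ha
    refine (isBigO_zero _ _).congr' ?_ EventuallyEq.rfl
    filter_upwards [eventually_gt_atTop m] with n hn
    rw [GammaSeq_eq_div_ascPochhammer (-(m : ℂ)),
      ascPochhammer_eval_neg_coe_nat_of_lt (Nat.lt_succ_of_lt hn)]
    simp

-- If `a` is a nonpositive integer, both sides vanish for large `n`: `GammaSeq a n = _ / 0 = 0`.
theorem ascPochhammer_succ_div_eq_cpow_mul (a : ℂ) {c : ℂ} (hc : NotNonposInt c) {n : ℕ}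
    (hn : n ≠ 0) :
    (ascPochhammer ℂ (n + 1)).eval a / (ascPochhammer ℂ (n + 1)).eval c =
      (n : ℂ) ^ (a - c) * (GammaSeq c n / GammaSeq a n) := by
  have hn' : (n : ℂ) ≠ 0 := Nat.cast_ne_zero.2 hn
  have := hc.ascPochhammer_eval_ne_zero (n + 1)
  have := Nat.cast_ne_zero (R := ℂ) |>.2 n.factorial_ne_zero
  have : (n : ℂ) ^ a ≠ 0 := cpow_ne_zero_iff.2 (Or.inl hn')
  have : (n : ℂ) ^ c ≠ 0 := cpow_ne_zero_iff.2 (Or.inl hn')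
  rw [GammaSeq_eq_div_ascPochhammer, GammaSeq_eq_div_ascPochhammer, div_div_div_eq,
    cpow_sub _ _ hn']
  field_simp

theorem isBigO_ascPochhammer_div (a c : ℂ) (hc : NotNonposInt c) :
    (fun n : ℕ ↦ (ascPochhammer ℂ n).eval a / (ascPochhammer ℂ n).eval c)
      =O[atTop] fun n : ℕ ↦ (n : ℝ) ^ (a - c).re := by
  refine isBigO_natCast_rpow_of_isBigO_succ ?_
  have hpow : (fun n : ℕ ↦ (n : ℂ) ^ (a - c)) =O[atTop] fun n : ℕ ↦ (n : ℝ) ^ (a - c).re := by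
    refine IsBigO.of_bound' ?_
    filter_upwards [eventually_gt_atTop 0] with n hn
    rw [norm_natCast_cpow_of_pos hn, Real.norm_of_nonneg (by positivity)]
  refine (hpow.mul (isBigO_GammaSeq_div_GammaSeq a c)).congr' ?_ (by simp)
  filter_upwards [eventually_ne_atTop 0] with n hn
  exact (ascPochhammer_succ_div_eq_cpow_mul a hc hn).symm

theorem sum_range_mul_eq_sub_of_ratio {K : Type*} [CommRing K] {R : ℕ → K} {a b c e : K}
    (hrec : ∀ k : ℕ, R (k + 1) * ((k + c) * (k + e)) = R k * ((k + a) * (k + b)))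
    (hrel : (c - 1) * (e - 1) - a * b = c + e - 2 - a - b) (n : ℕ) :
    (∑ k ∈ range n, (k + 1) * R k) * (c + e - 2 - a - b) =
      R 0 * ((c - 1) * (e - 1)) - R n * ((n + c - 1) * (n + e - 1)) := by
  induction n with
  | zero => simp
  | succ n ih =>
    rw [sum_range_succ, add_mul, ih]
    push_cast
    linear_combination hrec n - R n * hrel

noncomputable def pochRatio (a b c e : ℂ) (n : ℕ) : ℂ :=
  (ascPochhammer ℂ n).eval a * (ascPochhammer ℂ n).eval b /
    ((ascPochhammer ℂ n).eval c * (ascPochhammer ℂ n).eval e)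

section pochRatio

variable (a b : ℂ) {c e : ℂ}

theorem hyp3F2_two_eq_tsum (hc : NotNonposInt c) (he : NotNonposInt e) :
    hyp3F2 2 a b c e = ∑' k : ℕ, (k + 1) * pochRatio a b c e k := by
  refine tsum_congr fun k ↦ ?_
  have := hc.ascPochhammer_eval_ne_zero k
  have := he.ascPochhammer_eval_ne_zero k
  have : (k.factorial : ℂ) ≠ 0 := Nat.cast_ne_zero.2 k.factorial_ne_zero
  rw [pochRatio, ascPochhammer_eval_two, Nat.factorial_succ]
  push_cast
  field_simp

theorem pochRatio_succ_mul (hc : NotNonposInt c) (he : NotNonposInt e) (k : ℕ) :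
    pochRatio a b c e (k + 1) * ((k + c) * (k + e)) =
      pochRatio a b c e k * ((k + a) * (k + b)) := by
  have := hc.ascPochhammer_eval_ne_zero k
  have := he.ascPochhammer_eval_ne_zero k
  have : c + k ≠ 0 := fun h ↦ hc k (by linear_combination h)
  have : e + k ≠ 0 := fun h ↦ he k (by linear_combination h)
  simp only [pochRatio, ascPochhammer_succ_eval]
  field_simp
  ring

theorem isBigO_pochRatio (hc : NotNonposInt c) (he : NotNonposInt e) :
    pochRatio a b c e =O[atTop] fun n : ℕ ↦ (n : ℝ) ^ (a + b - c - e).re := by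
  rw [show (a + b - c - e).re = (a - c).re + (b - e).re by simp only [add_re, sub_re]; ring]
  exact ((isBigO_ascPochhammer_div a c hc).mul_natCast_rpow
    (isBigO_ascPochhammer_div b e he)).congr_left fun n ↦ (mul_div_mul_comm _ _ _ _).symm

end pochRatio

theorem hyp3F2_two_eq {a b c e : ℂ} (hc : NotNonposInt c) (he : NotNonposInt e)
    (hrel : (c - 1) * (e - 1) - a * b = c + e - 2 - a - b) (hre : 0 < (c + e - 2 - a - b).re) :
    hyp3F2 2 a b c e = (c - 1) * (e - 1) / (c + e - 2 - a - b) := by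
  set s := c + e - 2 - a - b with hs_def
  have hs0 : s ≠ 0 := fun h ↦ by simp [h] at hre
  have hR : pochRatio a b c e =O[atTop] fun n : ℕ ↦ (n : ℝ) ^ (-(2 + s.re)) := by
    convert isBigO_pochRatio a b hc he using 4
    simp only [hs_def, add_re, sub_re, re_ofNat]; ring
  have hsum : Summable fun k : ℕ ↦ (k + 1) * pochRatio a b c e k :=
    summable_of_isBigO_nat (Real.summable_nat_rpow.2 (by linarith : 1 + -(2 + s.re) < -1))
      ((isBigO_natCast_add 1).mul_natCast_rpow hR)
  have hlim : Tendsto (fun n : ℕ ↦ pochRatio a b c e n * ((n + c - 1) * (n + e - 1)))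
      atTop (𝓝 0) := by
    have hbound := hR.mul_natCast_rpow
      ((isBigO_natCast_add (c - 1)).mul_natCast_rpow (isBigO_natCast_add (e - 1)))
    rw [show -(2 + s.re) + (1 + 1) = -s.re by ring] at hbound
    exact (hbound.congr_left fun n ↦ by ring).trans_tendsto
      ((tendsto_rpow_neg_atTop hre).comp tendsto_natCast_atTop_atTop)
  have hR0 : pochRatio a b c e 0 = 1 := by simp [pochRatio]
  have hpartial : Tendsto (fun n ↦ ∑ k ∈ range n, (k + 1) * pochRatio a b c e k) atTop
      (𝓝 ((c - 1) * (e - 1) / s)) := by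
    have := (tendsto_const_nhds (x := (c - 1) * (e - 1)) |>.sub hlim).div_const s
    rw [sub_zero] at this
    refine this.congr fun n ↦ (eq_div_of_mul_eq hs0 ?_).symm
    rw [sum_range_mul_eq_sub_of_ratio (pochRatio_succ_mul a b hc he) hrel n, hR0, one_mul]
  rw [hyp3F2_two_eq_tsum a b hc he]
  exact tendsto_nhds_unique hsum.hasSum.tendsto_sum_nat hpartial

theorem stmt11_general (a b c : ℂ) (hc2 : c ≠ 2)
    (hconv : (c + (2*c - 3 - a + a*b - b)/(c - 2) - 2 - a - b).re > 0)
    (hb1 : NotNonposInt c) (hb2 : NotNonposInt ((2*c - 3 - a + a*b - b)/(c - 2))) :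
    hyp3F2 2 a b c ((2*c - 3 - a + a*b - b)/(c - 2)) =
      -((c - 1) * (c + a*b - b - a - 1)) / ((c - 1 - b) * (a + 1 - c)) := by
  have hc2' : c - 2 ≠ 0 := sub_ne_zero.2 hc2
  set e := (2*c - 3 - a + a*b - b)/(c - 2) with he
  have hs0 : c + e - 2 - a - b ≠ 0 := fun h ↦ by simp [h] at hconv
  have hrel : (c - 1) * (e - 1) - a * b = c + e - 2 - a - b := by
    rw [he]; field_simp; ring
  have hfactor : (c - 1 - b) * (a + 1 - c) = -((c - 2) * (c + e - 2 - a - b)) := by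
    rw [he]; field_simp; ring
  rw [hyp3F2_two_eq hb1 hb2 hrel hconv, hfactor, div_eq_div_iff hs0 (by simp [hc2', hs0]), he]
  field_simp
  ring

theorem stmt11 (a b c : ℂ) (hc2 : c ≠ 2) (hcb : c ≠ 1 + b) (hca : c ≠ a + 1)
    (hconv : (c + (2*c - 3 - a + a*b - b)/(c - 2) - 2 - a - b).re > 0)
    (hb1 : NotNonposInt c) (hb2 : NotNonposInt ((2*c - 3 - a + a*b - b)/(c - 2))) :
    hyp3F2 2 a b c ((2*c - 3 - a + a*b - b)/(c - 2)) =
      -((c - 1) * (c + a*b - b - a - 1)) / ((c - 1 - b) * (a + 1 - c)) :=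
  stmt11_general a b c hc2 hconv hb1 hb2
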